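/- arXiv:1401.5828 — 2 statements merged into one kernel-verified Lean document; each statement's English description precedes it below -/
import Mathlib

section
/- For the binary symmetric Markov source with parameter p and Hamming distortion, the function D ↦ H(1 - p - D + 2pD) - H(D) is strictly decreasing on (0, 1/2) when p ∈ (0, 1/2), and equals 0 at D = 1/2. -/
noncomputable def binEnt (x : ℝ) : ℝ := -x * Real.log x - (1 - x) * Real.log (1 - x)

open Real

lemma binEnt_eq_binEntropy : binEnt = binEntropy := by
  ext x
  simp only [binEnt, binEntropy, log_inv]
  ring

lemma deriv_binEntropy_neg {x : ℝ} (hx₀ : 2⁻¹ < x) (hx₁ : x < 1) : deriv binEntropy x < 0 := by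
  rw [deriv_binEntropy, sub_neg]
  exact log_lt_log (by linarith) (by linarith)

/-- `x + y < 1` is `x y < (1 - x) (1 - y)`, i.e. the log-odds of `x` and of `y` have negative sum. -/
lemma deriv_binEntropy_add_pos {x y : ℝ} (hx : 0 < x) (hy : 0 < y) (hxy : x + y < 1) :
    0 < deriv binEntropy x + deriv binEntropy y := by
  have h1x : 0 < 1 - x := by linarith
  have h1y : 0 < 1 - y := by linarith
  have key : log (x * y) < log ((1 - x) * (1 - y)) :=
    log_lt_log (mul_pos hx hy) (by nlinarith)
  rw [log_mul hx.ne' hy.ne', log_mul h1x.ne' h1y.ne'] at key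
  rw [deriv_binEntropy, deriv_binEntropy]
  linarith

lemma hasDerivAt_binEntropy_comp_sub_binEntropy {f : ℝ → ℝ} {f' x : ℝ} (hf : HasDerivAt f f' x)
    (hfx₀ : 0 < f x) (hfx₁ : f x < 1) (hx₀ : 0 < x) (hx₁ : x < 1) :
    HasDerivAt (fun y => binEntropy (f y) - binEntropy y)
      (deriv binEntropy (f x) * f' - deriv binEntropy x) x :=
  ((differentiableAt_binEntropy hfx₀.ne' hfx₁.ne).hasDerivAt.comp x hf).sub
    (differentiableAt_binEntropy hx₀.ne' hx₁.ne).hasDerivAt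

theorem bsms_nrdf_strict_anti (p : ℝ) (hp : p ∈ Set.Ioo (0:ℝ) (1/2)) :
    StrictAntiOn (fun D : ℝ => binEnt (1 - p - D + 2 * p * D) - binEnt D)
      (Set.Ioo (0:ℝ) (1/2)) ∧
    binEnt (1 - p - (1/2) + 2 * p * (1/2)) - binEnt (1/2) = 0 := by
  obtain ⟨hp₀, hp₁⟩ := hp
  refine ⟨?_, sub_eq_zero.2 (congrArg binEnt (by ring))⟩
  rw [binEnt_eq_binEntropy]
  refine strictAntiOn_of_deriv_neg (convex_Ioo _ _) (by fun_prop) fun D hD => ?_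
  obtain ⟨hD₀, hD₁⟩ : 0 < D ∧ D < 1/2 := by simpa using hD
  have hm₀ : 2⁻¹ < 1 - p - D + 2 * p * D := by nlinarith
  have hm₁ : 1 - p - D + 2 * p * D < 1 := by nlinarith
  have hm : HasDerivAt (fun D => 1 - p - D + 2 * p * D) (2 * p - 1) D :=
    (((hasDerivAt_id' D).const_sub (1 - p)).add ((hasDerivAt_id' D).const_mul (2 * p))).congr_deriv
      (by ring)
  have hf := hasDerivAt_binEntropy_comp_sub_binEntropy hm (by linarith) hm₁ hD₀ (by linarith)
  rw [hf.deriv]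
  -- `(2p - 1) H'(m) - H'(D) = 2p H'(m) - (H'(m) + H'(D))` with `m = 1 - p - D + 2pD`
  nlinarith [deriv_binEntropy_neg hm₀ hm₁,
    deriv_binEntropy_add_pos (by linarith) hD₀ (by nlinarith : 1 - p - D + 2 * p * D + D < 1)]
end

section
/- Given λ_1, ..., λ_p > 0 and D with 0 < D ≤ Σ λ_i, the allocation δ_i = min(ξ, λ_i) with ξ chosen so that Σ δ_i = D minimizes Σ_{i=1}^p (1/2)·log(λ_i/δ_i) over all allocations (δ_1, ..., δ_p) satisfying 0 < δ_i ≤ λ_i for all i and Σ δ_i = D. -/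
/-!
Write `δ*ᵢ = min ξ λᵢ`. Concavity of `log` gives the tangent bound
`log δᵢ - log δ*ᵢ ≤ (δᵢ - δ*ᵢ) / δ*ᵢ`, and the right side is at most `(δᵢ - δ*ᵢ) / ξ`:
either `δ*ᵢ = ξ`, or `δ*ᵢ = λᵢ < ξ` and then `δᵢ - δ*ᵢ ≤ 0`. Summing over `i`, the bound
`(∑ δᵢ - ∑ δ*ᵢ) / ξ` vanishes because both allocations have total distortion `D`, so
`∑ log δᵢ ≤ ∑ log δ*ᵢ`, which is the claim.
-/

open Finset Real

theorem log_sub_log_le_sub_div {x y : ℝ} (hx : 0 < x) (hy : 0 < y) :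
    log y - log x ≤ (y - x) / x := by
  rw [← log_div hy.ne' hx.ne', sub_div, div_self hx.ne']
  exact log_le_sub_one_of_pos (div_pos hy hx)

theorem log_sub_log_min_le {ξ l d : ℝ} (hξ : 0 < ξ) (hl : 0 < l) (hd : 0 < d) (hdl : d ≤ l) :
    log d - log (min ξ l) ≤ (d - min ξ l) / ξ := by
  refine (log_sub_log_le_sub_div (lt_min hξ hl) hd).trans ?_
  rcases le_total ξ l with h | h
  · rw [min_eq_left h]
  · rw [min_eq_right h]
    rw [← neg_sub l d, neg_div, neg_div]
    exact neg_le_neg (div_le_div_of_nonneg_left (sub_nonneg.mpr hdl) hl h)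

theorem sum_log_le_sum_log_min {ι : Type*} [Fintype ι] {l d : ι → ℝ} {ξ : ℝ} (hξ : 0 < ξ)
    (hl : ∀ i, 0 < l i) (hd : ∀ i, 0 < d i) (hdl : ∀ i, d i ≤ l i)
    (hsum : ∑ i, d i = ∑ i, min ξ (l i)) :
    ∑ i, log (d i) ≤ ∑ i, log (min ξ (l i)) := by
  have hgain : ∑ i, (log (d i) - log (min ξ (l i))) ≤ ∑ i, (d i - min ξ (l i)) / ξ :=
    sum_le_sum fun i _ => log_sub_log_min_le hξ (hl i) (hd i) (hdl i)
  rw [sum_sub_distrib, ← sum_div, sum_sub_distrib, hsum, sub_self, zero_div] at hgain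
  linarith

theorem sum_half_log_div {ι : Type*} [Fintype ι] {l d : ι → ℝ} (hl : ∀ i, l i ≠ 0)
    (hd : ∀ i, d i ≠ 0) :
    ∑ i, (1 / 2 : ℝ) * log (l i / d i) = 1 / 2 * (∑ i, log (l i) - ∑ i, log (d i)) := by
  rw [← sum_sub_distrib, mul_sum]
  exact sum_congr rfl fun i _ => by rw [log_div (hl i) (hd i)]

theorem waterfilling_optimal_general (p : ℕ) (l : Fin p → ℝ) (hpos : ∀ i, 0 < l i)
    (D : ℝ)
    (ξ : ℝ) (hξ : 0 < ξ) (hsum : ∑ i, min ξ (l i) = D)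
    (δ : Fin p → ℝ) (hδpos : ∀ i, 0 < δ i) (hδle : ∀ i, δ i ≤ l i)
    (hδsum : ∑ i, δ i = D) :
    ∑ i, (1/2 : ℝ) * Real.log (l i / min ξ (l i)) ≤
      ∑ i, (1/2 : ℝ) * Real.log (l i / δ i) := by
  have hl i : l i ≠ 0 := (hpos i).ne'
  rw [sum_half_log_div hl fun i => (lt_min hξ (hpos i)).ne',
    sum_half_log_div hl fun i => (hδpos i).ne']
  have := sum_log_le_sum_log_min hξ hpos hδpos hδle (hδsum.trans hsum.symm)
  linarith

theorem waterfilling_optimal (p : ℕ) (l : Fin p → ℝ) (hpos : ∀ i, 0 < l i)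
    (D : ℝ) (hD0 : 0 < D) (hDS : D ≤ ∑ i, l i)
    (ξ : ℝ) (hξ : 0 < ξ) (hsum : ∑ i, min ξ (l i) = D)
    (δ : Fin p → ℝ) (hδpos : ∀ i, 0 < δ i) (hδle : ∀ i, δ i ≤ l i)
    (hδsum : ∑ i, δ i = D) :
    ∑ i, (1/2 : ℝ) * Real.log (l i / min ξ (l i)) ≤
      ∑ i, (1/2 : ℝ) * Real.log (l i / δ i) :=
  waterfilling_optimal_general p l hpos D ξ hξ hsum δ hδpos hδle hδsum
end
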